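/- arXiv:2002.04048 — 8 statements merged into one kernel-verified Lean document; each statement's English description precedes it below -/
import Mathlib

section
/- For any edge-minimal 2-connected graph (S,F), the number of edges satisfies |S| ≤ |F| ≤ 2(|S|-1). -/
/-!
Starting from any cycle of `G`, grow a subgraph `H` by open ears. A vertex `v` not yet covered is
joined to two distinct vertices of `H` by a fan, i.e. two paths meeting only at `v`; cutting the
fan where it first meets `H` gives a path of length at least two through `v` whose ends, and only
whose ends, lie in `H`. Attaching such an ear keeps `H` 2-connected on its vertices, since closing
the ear by a path of `H` gives a cycle through any prescribed pair of vertices. This ends with a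
spanning 2-connected subgraph, which is `G` itself by edge-minimality. A cycle has as many edges as
vertices and an ear with `ℓ ≥ 2` edges adds `ℓ - 1 ≥ ℓ / 2` vertices, so `n ≤ m ≤ 2n - 3`.
-/

open SimpleGraph

/-- Two internally disjoint (and edge-disjoint) `s`-`t` paths exist in `G`, i.e. κ_G(s,t) ≥ 2. -/
def TwoInternallyDisjointPaths {V : Type*} (G : SimpleGraph V) (s t : V) : Prop :=
  ∃ p q : G.Walk s t, p.IsPath ∧ q.IsPath ∧ (∀ e ∈ p.edges, e ∉ q.edges) ∧
    ∀ v ∈ p.support, v ∈ q.support → v = s ∨ v = t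

/-- A graph is 2-connected: at least 3 vertices and two internally disjoint paths
between every pair of distinct vertices. -/
def TwoConnected {V : Type*} [Fintype V] (G : SimpleGraph V) : Prop :=
  3 ≤ Fintype.card V ∧ ∀ s t : V, s ≠ t → TwoInternallyDisjointPaths G s t

theorem List.Nodup.ncard_setOf_mem {α : Type*} {l : List α} (hl : l.Nodup) :
    {x | x ∈ l}.ncard = l.length := by
  classical
  rw [← List.coe_toFinset, Set.ncard_coe_finset, List.toFinset_card_of_nodup hl]

namespace SimpleGraph

variable {V : Type*} {G H : SimpleGraph V} {u v w : V}

theorem support_sup : (G ⊔ H).support = G.support ∪ H.support := by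
  ext v
  simp only [mem_support, sup_adj, exists_or, Set.mem_union]

namespace Walk

theorem IsPath.start_notMem_support_tail {p : G.Walk u v} (hp : p.IsPath) :
    u ∉ p.support.tail := by
  have := hp.support_nodup
  rw [← p.cons_tail_support] at this
  exact (List.nodup_cons.mp this).1

theorem IsPath.append {p : G.Walk u v} {q : G.Walk v w} (hp : p.IsPath) (hq : q.IsPath)
    (h : ∀ x ∈ p.support, x ∈ q.support → x = v) : (p.append q).IsPath := by
  rw [isPath_def, support_append]
  refine hp.support_nodup.append hq.support_nodup.tail fun x hx hx' ↦ ?_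
  obtain rfl := h x hx (List.mem_of_mem_tail hx')
  exact hq.start_notMem_support_tail hx'

theorem IsPath.eq_of_mem_support_append {x : V} {p : G.Walk u v} {q : G.Walk v w}
    (hpq : (p.append q).IsPath) (hp : x ∈ p.support) (hq : x ∈ q.support) : x = v := by
  by_contra h
  exact hpq.ne_of_mem_support_of_append h hp hq rfl

theorem IsPath.isCycle_append_of_support_inter {p : G.Walk u v} {q : G.Walk v u}
    (hp : p.IsPath) (hq : q.IsPath) (h : ∀ x ∈ p.support, x ∈ q.support → x = u ∨ x = v)
    (hl : 2 ≤ p.length) : (p.append q).IsCycle := by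
  refine hp.isCycle_append hq (fun x hx hx' ↦ ?_) (.inl hl)
  rcases h x (List.mem_of_mem_tail hx) (List.mem_of_mem_tail hx') with rfl | rfl
  · exact hp.start_notMem_support_tail hx
  · exact hq.start_notMem_support_tail hx'

theorem exists_eq_append_first_mem (p : G.Walk u v) {T : Set V} (hv : v ∈ T) :
    ∃ c ∈ T, ∃ (q : G.Walk u c) (r : G.Walk c v), p = q.append r ∧
      ∀ x ∈ q.support, x ∈ T → x = c := by
  induction p with
  | nil => exact ⟨_, hv, nil, nil, rfl, by simp⟩
  | @cons u _ _ huv p ih =>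
    by_cases hu : u ∈ T
    · exact ⟨u, hu, nil, cons huv p, rfl, by simp⟩
    obtain ⟨c, hc, q, r, rfl, hq⟩ := ih hv
    refine ⟨c, hc, cons huv q, r, rfl, fun x hx hxT ↦ ?_⟩
    rcases (mem_support_iff _).mp hx with rfl | hx
    · exact absurd hxT hu
    · exact hq x (by simpa using hx) hxT

theorem mem_graph_support {x : V} {p : G.Walk u v} (hu : u ∈ G.support)
    (hx : x ∈ p.support) : x ∈ G.support := by
  cases p with
  | nil => rwa [mem_support_nil_iff.mp hx]
  | cons h p => exact mem_support_of_mem_walk_support _ not_nil_cons hx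

theorem mem_edgeSet_spanningCoe_toSubgraph {p : G.Walk u v} {e : Sym2 V} (he : e ∈ p.edges) :
    e ∈ p.toSubgraph.spanningCoe.edgeSet := by
  rwa [Subgraph.edgeSet_spanningCoe, edgeSet_toSubgraph]

theorem mem_support_of_mem_support_spanningCoe_toSubgraph {p : G.Walk u v} {x : V}
    (hx : x ∈ p.toSubgraph.spanningCoe.support) : x ∈ p.support :=
  have ⟨_, hadj⟩ := hx
  mem_support_of_adj_toSubgraph hadj

theorem support_spanningCoe_toSubgraph {p : G.Walk u v} (hp : ¬p.Nil) :
    p.toSubgraph.spanningCoe.support = {x | x ∈ p.support} := by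
  refine Set.Subset.antisymm (fun x ↦ mem_support_of_mem_support_spanningCoe_toSubgraph)
    fun x hx ↦ ?_
  obtain ⟨e, he, hxe⟩ := (mem_support_iff_exists_mem_edges_of_not_nil hp).mp hx
  obtain ⟨y, rfl⟩ := Sym2.mem_iff_exists.mp hxe
  exact ⟨y, adj_toSubgraph_iff_mem_edges.mpr he⟩

theorem IsPath.ne_of_two_le_length {p : G.Walk u v} (hp : p.IsPath) (hl : 2 ≤ p.length) :
    u ≠ v :=
  mt hp.nil_iff_eq.mpr (not_nil_iff_lt_length.mpr (by omega))

theorem IsTrail.ncard_edgeSet {p : G.Walk u v} (hp : p.IsTrail) : p.edgeSet.ncard = p.length := by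
  rw [edgeSet, hp.edges_nodup.ncard_setOf_mem, length_edges]

theorem IsPath.ncard_support {p : G.Walk u v} (hp : p.IsPath) :
    {x | x ∈ p.support}.ncard = p.length + 1 := by
  rw [hp.support_nodup.ncard_setOf_mem, length_support]

theorem IsCycle.ncard_support {c : G.Walk u u} (hc : c.IsCycle) :
    {x | x ∈ c.support}.ncard = c.length := by
  have htail : {x | x ∈ c.support} = {x | x ∈ c.support.tail} := by
    ext x
    rw [Set.mem_ofPred, Set.mem_ofPred, mem_support_iff, or_iff_right_of_imp]
    rintro rfl
    exact end_mem_tail_support hc.not_nil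
  rw [htail, hc.support_nodup.ncard_setOf_mem, List.length_tail, length_support,
    Nat.add_sub_cancel]

theorem IsPath.disjoint_edgeSet_of_support_inter {x y : V} {p : G.Walk x y} (hp : p.IsPath)
    (hl : 2 ≤ p.length) (hint : ∀ v ∈ p.support, v ∈ H.support → v = x ∨ v = y) :
    Disjoint H.edgeSet p.edgeSet := by
  refine Set.disjoint_left.mpr fun e heH hep ↦ ?_
  induction e with
  | _ a b =>
    have hab : a ≠ b := (p.adj_of_mem_edges hep).ne
    have ha := hint a (fst_mem_support_of_mem_edges p hep) heH.left_mem_support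
    have hb := hint b (snd_mem_support_of_mem_edges p hep) heH.right_mem_support
    have hxy : s(x, y) ∈ p.edges := by
      rcases ha with rfl | rfl <;> rcases hb with rfl | rfl
      exacts [absurd rfl hab, hep, Sym2.eq_swap ▸ hep, absurd rfl hab]
    have := hp.length_eq_one_of_mem_edges hxy
    omega

end Walk

end SimpleGraph

open Walk

section TwoConnectivity

variable {V : Type*} {G H : SimpleGraph V} {s t : V}

theorem TwoInternallyDisjointPaths.mono (h : TwoInternallyDisjointPaths G s t) (hGH : G ≤ H) :
    TwoInternallyDisjointPaths H s t := by
  obtain ⟨p, q, hp, hq, hpq, hint⟩ := h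
  refine ⟨p.mapLe hGH, q.mapLe hGH, hp.mapLe hGH, hq.mapLe hGH, ?_, ?_⟩ <;>
    simpa only [edges_mapLe_eq_edges, support_mapLe_eq_support]

theorem TwoInternallyDisjointPaths.symm (h : TwoInternallyDisjointPaths G s t) :
    TwoInternallyDisjointPaths G t s := by
  obtain ⟨p, q, hp, hq, hpq, hint⟩ := h
  refine ⟨p.reverse, q.reverse, hp.reverse, hq.reverse, ?_, fun v hv hv' ↦ ?_⟩
  · simpa only [edges_reverse, List.mem_reverse] using hpq
  · rw [support_reverse, List.mem_reverse] at hv hv'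
    exact (hint v hv hv').symm

theorem TwoInternallyDisjointPaths.exists_isCycle (h : TwoInternallyDisjointPaths G s t)
    (hst : s ≠ t) : ∃ (u : V) (c : G.Walk u u), c.IsCycle := by
  obtain ⟨p, q, hp, hq, hpq, -⟩ := h
  have hne : p ≠ q := by
    rintro rfl
    obtain ⟨e, he⟩ := List.exists_mem_of_ne_nil _ (p.edges_eq_nil.not.mpr (p.not_nil_of_ne hst))
    exact hpq e he he
  obtain ⟨u, _, _, _, -, -, hc⟩ := hp.exists_isCycle_of_ne hq hne
  exact ⟨u, _, hc⟩

theorem SimpleGraph.Walk.IsCycle.twoInternallyDisjointPaths [DecidableEq V] {u : V}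
    {c : G.Walk u u} (hc : c.IsCycle) (hs : s ∈ c.support) (ht : t ∈ c.support) (hst : s ≠ t) :
    TwoInternallyDisjointPaths G s t := by
  set c' := c.rotate s hs
  have hc' : c'.IsCycle := hc.rotate hs
  have ht' : t ∈ c'.support := (c.mem_support_rotate_iff s hs).mpr ht
  have hsplit := c'.take_spec ht'
  have hP : (c'.takeUntil t ht').IsPath := hc'.isPath_takeUntil ht'
  have hD : (c'.dropUntil t ht').IsPath :=
    (hsplit ▸ hc').isPath_of_append_right (not_nil_of_ne hst)
  have htail := hc'.support_nodup
  rw [← hsplit, tail_support_append] at htail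
  refine ⟨c'.takeUntil t ht', (c'.dropUntil t ht').reverse, hP, hD.reverse, ?_, ?_⟩
  · intro e he he'
    rw [edges_reverse, List.mem_reverse] at he'
    exact hc'.isTrail.disjoint_edges_takeUntil_dropUntil ht' he he'
  · intro v hv hv'
    rw [support_reverse, List.mem_reverse] at hv'
    rw [mem_support_iff] at hv hv'
    rcases hv with rfl | hv
    · exact .inl rfl
    rcases hv' with rfl | hv'
    · exact .inr rfl
    exact absurd hv' (List.disjoint_of_nodup_append htail hv)

theorem TwoConnected.mono [Fintype V] (h : TwoConnected G) (hGH : G ≤ H) : TwoConnected H :=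
  ⟨h.1, fun s t hst ↦ (h.2 s t hst).mono hGH⟩

theorem eq_of_le_of_twoConnected [Fintype V]
    (hmin : ∀ e ∈ G.edgeSet, ¬TwoConnected (G.deleteEdges {e}))
    (hHG : H ≤ G) (hH : TwoConnected H) : H = G := by
  refine hHG.antisymm fun a b hab ↦ by_contra fun hnot ↦ hmin s(a, b) hab (hH.mono ?_)
  intro u w huw
  refine (deleteEdges_adj ..).mpr ⟨hHG huw, fun he ↦ hnot ?_⟩
  rcases Sym2.eq_iff.mp (Set.mem_singleton_iff.mp he) with ⟨rfl, rfl⟩ | ⟨rfl, rfl⟩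
  exacts [huw, huw.symm]

def TwoConnectedOnSupport (H : SimpleGraph V) : Prop :=
  ∀ ⦃s t : V⦄, s ∈ H.support → t ∈ H.support → s ≠ t → TwoInternallyDisjointPaths H s t

theorem TwoConnectedOnSupport.twoConnected [Fintype V] (h : TwoConnectedOnSupport H)
    (hH : H.support = Set.univ) (hcard : 3 ≤ Fintype.card V) : TwoConnected H :=
  ⟨hcard, fun _ _ hst ↦ h (hH ▸ trivial) (hH ▸ trivial) hst⟩

end TwoConnectivity

section Fan

variable {V : Type*} [DecidableEq V] {G : SimpleGraph V} {x y t c : V}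

theorem exists_isPath_avoiding_of_mem_support {P Q : G.Walk x t} (hP : P.IsPath)
    (hPQ : ∀ v ∈ P.support, v ∈ Q.support → v = x ∨ v = t) {R : G.Walk y c} (hR : R.IsPath)
    (hRPQ : ∀ v ∈ R.support, v ∈ P.support ∨ v ∈ Q.support → v = c)
    (hcP : c ∈ P.support) (hcx : c ≠ x) :
    ∃ Py : G.Walk y t, Py.IsPath ∧ ∀ v ∈ Q.support, v ∈ Py.support → v = t := by
  have hjunction := P.take_spec hcP ▸ hP
  refine ⟨R.append (P.dropUntil c hcP), ?_, fun v hvQ hv ↦ ?_⟩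
  · exact hR.append (hP.dropUntil hcP)
      fun v hv hv' ↦ hRPQ v hv (.inl (P.support_dropUntil_subset_support hcP hv'))
  rcases (mem_support_append_iff _ _).mp hv with hvR | hvD
  · obtain rfl := hRPQ v hvR (.inr hvQ)
    exact (hPQ v hcP hvQ).resolve_left hcx
  · refine (hPQ v (P.support_dropUntil_subset_support hcP hvD) hvQ).resolve_left ?_
    rintro rfl
    exact hcx (hjunction.eq_of_mem_support_append (start_mem_support _) hvD).symm

theorem exists_fan (hxy : x ≠ y) (hx : x ≠ t → TwoInternallyDisjointPaths G x t)
    (hy : y ≠ t → TwoInternallyDisjointPaths G y t) :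
    ∃ (Px : G.Walk x t) (Py : G.Walk y t), Px.IsPath ∧ Py.IsPath ∧
      ∀ v ∈ Px.support, v ∈ Py.support → v = t := by
  rcases eq_or_ne x t with rfl | hxt
  · obtain ⟨p, -, hp, -⟩ := hy hxy.symm
    exact ⟨nil, p, .nil, hp, by simp⟩
  rcases eq_or_ne y t with rfl | hyt
  · obtain ⟨p, -, hp, -⟩ := hx hxy
    exact ⟨p, nil, hp, .nil, by simp⟩
  obtain ⟨P, Q, hP, hQ, -, hPQ⟩ := hx hxt
  obtain ⟨R, R', hR, hR', -, hRR'⟩ := hy hyt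
  -- `R` and `R'`, being internally disjoint, do not both first meet `P ∪ Q` at `x`
  obtain ⟨c, R₁, hR₁, hR₁PQ, hc, hcx⟩ : ∃ (c : V) (R₁ : G.Walk y c), R₁.IsPath ∧
      (∀ v ∈ R₁.support, v ∈ P.support ∨ v ∈ Q.support → v = c) ∧
      (c ∈ P.support ∨ c ∈ Q.support) ∧ c ≠ x := by
    have ht : t ∈ {v | v ∈ P.support ∨ v ∈ Q.support} := .inl P.end_mem_support
    obtain ⟨c, hc, R₁, _, rfl, hR₁PQ⟩ := R.exists_eq_append_first_mem ht
    obtain ⟨c', hc', R₁', _, rfl, hR₁'PQ⟩ := R'.exists_eq_append_first_mem ht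
    rcases eq_or_ne c x with rfl | hcx
    · refine ⟨c', R₁', hR'.of_append_left, hR₁'PQ, hc', ?_⟩
      rintro rfl
      rcases hRR' _ ((mem_support_append_iff _ _).mpr (.inl R₁.end_mem_support))
          ((mem_support_append_iff _ _).mpr (.inl R₁'.end_mem_support)) with h | h
      exacts [hxy h, hxt h]
    · exact ⟨c, R₁, hR.of_append_left, hR₁PQ, hc, hcx⟩
  rcases hc with hcP | hcQ
  · obtain ⟨Py, hPy, hQPy⟩ := exists_isPath_avoiding_of_mem_support hP hPQ hR₁ hR₁PQ hcP hcx
    exact ⟨Q, Py, hQ, hPy, hQPy⟩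
  · obtain ⟨Py, hPy, hPPy⟩ := exists_isPath_avoiding_of_mem_support hQ
      (fun v hvQ hvP ↦ hPQ v hvP hvQ) hR₁ (fun v hv h ↦ hR₁PQ v hv h.symm) hcQ hcx
    exact ⟨P, Py, hP, hPy, hPPy⟩

end Fan

section EarDecomposition

variable {V : Type*} {G H : SimpleGraph V}

theorem TwoConnectedOnSupport.exists_isPath_mem_support [DecidableEq V]
    (hH : TwoConnectedOnSupport H) {x y t : V} (hx : x ∈ H.support) (hy : y ∈ H.support)
    (ht : t ∈ H.support) (hxy : x ≠ y) : ∃ q : H.Walk x y, q.IsPath ∧ t ∈ q.support := by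
  obtain ⟨Px, Py, hPx, hPy, hPxy⟩ := exists_fan hxy (hH hx ht) (hH hy ht)
  refine ⟨Px.append Py.reverse, hPx.append hPy.reverse fun v hv hv' ↦ ?_, ?_⟩
  · exact hPxy v hv (by simpa using hv')
  · exact (mem_support_append_iff _ _).mpr (.inl Px.end_mem_support)

theorem TwoConnectedOnSupport.sup_ear [DecidableEq V] (hH : TwoConnectedOnSupport H) {x y : V}
    {p : G.Walk x y} (hp : p.IsPath) (hl : 2 ≤ p.length) (hx : x ∈ H.support) (hy : y ∈ H.support)
    (hint : ∀ v ∈ p.support, v ∈ H.support → v = x ∨ v = y) :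
    TwoConnectedOnSupport (H ⊔ p.toSubgraph.spanningCoe) := by
  set H' := H ⊔ p.toSubgraph.spanningCoe
  have hxy := hp.ne_of_two_le_length hl
  have hsupp {v : V} (hv : v ∈ H'.support) : v ∈ H.support ∨ v ∈ p.support := by
    obtain ⟨w, hvw | hvw⟩ := hv
    · exact .inl hvw.left_mem_support
    · exact .inr (mem_support_of_mem_support_spanningCoe_toSubgraph hvw.left_mem_support)
  have hpH' : ∀ e ∈ p.edges, e ∈ H'.edgeSet := fun e he ↦ by
    rw [edgeSet_sup]
    exact .inr (mem_edgeSet_spanningCoe_toSubgraph he)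
  suffices key : ∀ ⦃s t : V⦄, s ∉ H.support → s ∈ p.support → t ∈ H'.support → s ≠ t →
      TwoInternallyDisjointPaths H' s t by
    intro s t hs ht hst
    by_cases hsH : s ∈ H.support
    · by_cases htH : t ∈ H.support
      · exact (hH hsH htH hst).mono le_sup_left
      · exact (key htH ((hsupp ht).resolve_left htH) hs hst.symm).symm
    · exact key hsH ((hsupp hs).resolve_left hsH) ht hst
  intro s t hsH hsp ht hst
  -- close the ear into a cycle through `t` by a `y`-`x` path of `H`
  obtain ⟨q, hq, htq⟩ : ∃ q : H.Walk y x, q.IsPath ∧ (t ∈ p.support ∨ t ∈ q.support) := by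
    by_cases htH : t ∈ H.support
    · obtain ⟨q, hq, htq⟩ := hH.exists_isPath_mem_support hy hx htH hxy.symm
      exact ⟨q, hq, .inr htq⟩
    · obtain ⟨q, -, hq, -⟩ := hH hy hx hxy.symm
      exact ⟨q, hq, .inl ((hsupp ht).resolve_left htH)⟩
  have hcycle : ((p.transfer H' hpH').append (q.mapLe le_sup_left)).IsCycle := by
    refine (hp.transfer _).isCycle_append_of_support_inter (hq.mapLe _) (fun v hv hv' ↦ ?_)
      (by rwa [length_transfer])
    rw [support_transfer] at hv
    rw [support_mapLe_eq_support] at hv'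
    exact hint v hv (mem_graph_support hy hv')
  refine hcycle.twoInternallyDisjointPaths ?_ ?_ hst <;>
    simp only [mem_support_append_iff, support_transfer, support_mapLe_eq_support]
  exacts [.inl hsp, htq]

inductive IsEarDecomposable (G : SimpleGraph V) : SimpleGraph V → Prop
  | cycle {u : V} {c : G.Walk u u} (hc : c.IsCycle) :
      IsEarDecomposable G c.toSubgraph.spanningCoe
  | ear {H : SimpleGraph V} {x y : V} {p : G.Walk x y} (hH : IsEarDecomposable G H)
      (hp : p.IsPath) (hl : 2 ≤ p.length) (hx : x ∈ H.support) (hy : y ∈ H.support)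
      (hint : ∀ v ∈ p.support, v ∈ H.support → v = x ∨ v = y) :
      IsEarDecomposable G (H ⊔ p.toSubgraph.spanningCoe)

namespace IsEarDecomposable

theorem le (h : IsEarDecomposable G H) : H ≤ G := by
  induction h with
  | cycle => exact Subgraph.spanningCoe_le _
  | ear _ _ _ _ _ _ ih => exact sup_le ih (Subgraph.spanningCoe_le _)

theorem twoConnectedOnSupport [DecidableEq V] (h : IsEarDecomposable G H) :
    TwoConnectedOnSupport H := by
  induction h with
  | cycle hc =>
    intro s t hs ht hst
    have hc' := hc.transfer fun e he ↦ mem_edgeSet_spanningCoe_toSubgraph he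
    refine hc'.twoInternallyDisjointPaths ?_ ?_ hst <;> rw [support_transfer]
    exacts [mem_support_of_mem_support_spanningCoe_toSubgraph hs,
      mem_support_of_mem_support_spanningCoe_toSubgraph ht]
  | ear _ hp hl hx hy hint ih => exact ih.sup_ear hp hl hx hy hint

theorem card_bounds [Finite V] (h : IsEarDecomposable G H) :
    H.support.ncard ≤ H.edgeSet.ncard ∧ H.edgeSet.ncard + 3 ≤ 2 * H.support.ncard := by
  induction h with
  | cycle hc =>
    rw [support_spanningCoe_toSubgraph hc.not_nil, Subgraph.edgeSet_spanningCoe,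
      edgeSet_toSubgraph, hc.ncard_support, hc.isTrail.ncard_edgeSet]
    have := hc.three_le_length
    omega
  | @ear H x y p _ hp hl hx hy hint ih =>
    have hinter : H.support ∩ {v | v ∈ p.support} = {x, y} := by
      ext v
      constructor
      · rintro ⟨hvH, hvp⟩
        exact hint v hvp hvH
      · rintro (rfl | rfl)
        exacts [⟨hx, p.start_mem_support⟩, ⟨hy, p.end_mem_support⟩]
    have hV := Set.ncard_union_add_ncard_inter H.support {v | v ∈ p.support}
    rw [hinter, Set.ncard_pair (hp.ne_of_two_le_length hl), hp.ncard_support] at hV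
    have hE := Set.ncard_union_eq (hp.disjoint_edgeSet_of_support_inter hl hint)
    rw [hp.isTrail.ncard_edgeSet] at hE
    rw [support_sup, support_spanningCoe_toSubgraph (not_nil_iff_lt_length.mpr (by omega)),
      edgeSet_sup, Subgraph.edgeSet_spanningCoe, edgeSet_toSubgraph, hE]
    omega

theorem exists_support_subset_of_notMem_support [DecidableEq V] [Finite V]
    (h : IsEarDecomposable G H) (hG : ∀ s t, s ≠ t → TwoInternallyDisjointPaths G s t)
    {v : V} (hv : v ∉ H.support) :
    ∃ H', IsEarDecomposable G H' ∧ H.support ⊆ H'.support ∧ v ∈ H'.support := by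
  obtain ⟨x, y, hx, hy, hxy⟩ :=
    (Set.one_lt_ncard_iff (s := H.support)).mp (by have := h.card_bounds; omega)
  obtain ⟨Px, Py, hPx, hPy, hPxy⟩ := exists_fan hxy (hG x v) (hG y v)
  -- the new ear runs along `Px` and `Py` from where they first meet `H`, traced back from `v`
  obtain ⟨a, ha, q₁, r₁, hq₁, hq₁H⟩ := Px.reverse.exists_eq_append_first_mem hx
  obtain ⟨b, hb, q₂, r₂, hq₂, hq₂H⟩ := Py.reverse.exists_eq_append_first_mem hy
  have hq₁Px {w : V} (hw : w ∈ q₁.support) : w ∈ Px.support := by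
    rw [← List.mem_reverse, ← support_reverse, hq₁, mem_support_append_iff]
    exact .inl hw
  have hq₂Py {w : V} (hw : w ∈ q₂.support) : w ∈ Py.support := by
    rw [← List.mem_reverse, ← support_reverse, hq₂, mem_support_append_iff]
    exact .inl hw
  have hq₁p : q₁.IsPath := (hq₁ ▸ hPx.reverse).of_append_left
  have hq₂p : q₂.IsPath := (hq₂ ▸ hPy.reverse).of_append_left
  have hl₁ := not_nil_iff_lt_length.mp (not_nil_of_ne (p := q₁) fun h ↦ hv (by rwa [h]))
  have hl₂ := not_nil_iff_lt_length.mp (not_nil_of_ne (p := q₂) fun h ↦ hv (by rwa [h]))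
  have hear : (q₁.reverse.append q₂).IsPath := hq₁p.reverse.append hq₂p fun w hw hw' ↦
    hPxy w (hq₁Px (by simpa using hw)) (hq₂Py hw')
  have hearl : 2 ≤ (q₁.reverse.append q₂).length := by
    rw [length_append, length_reverse]
    omega
  refine ⟨_, .ear h hear hearl ha hb fun w hw hwH ↦ ?_, ?_, ?_⟩
  · rcases (mem_support_append_iff _ _).mp hw with hw | hw
    exacts [.inl (hq₁H w (by simpa using hw) hwH), .inr (hq₂H w hw hwH)]
  · exact support_sup (G := H) ▸ Set.subset_union_left
  · rw [support_sup, support_spanningCoe_toSubgraph (not_nil_iff_lt_length.mpr (by omega))]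
    exact .inr ((mem_support_append_iff _ _).mpr (.inl (by simp)))

theorem exists_support_eq_univ [DecidableEq V] [Finite V] (h : IsEarDecomposable G H)
    (hG : ∀ s t, s ≠ t → TwoInternallyDisjointPaths G s t) :
    ∃ H', IsEarDecomposable G H' ∧ H'.support = Set.univ := by
  have : Nonempty {H // IsEarDecomposable G H} := ⟨⟨H, h⟩⟩
  obtain ⟨⟨H', hH'⟩, hmax⟩ :=
    Finite.exists_max fun H : {H // IsEarDecomposable G H} ↦ H.1.support.ncard
  refine ⟨H', hH', Set.eq_univ_of_forall fun v ↦ by_contra fun hv ↦ ?_⟩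
  obtain ⟨H'', hH'', hsub, hvH''⟩ := hH'.exists_support_subset_of_notMem_support hG hv
  exact (hmax ⟨H'', hH''⟩).not_gt
    (Set.ncard_lt_ncard (hsub.ssubset_of_not_subset fun h ↦ hv (h hvH'')))

end IsEarDecomposable

end EarDecomposition

/-- For any edge-minimal 2-connected graph `(S, F)` we have `|S| ≤ |F| ≤ 2(|S| - 1)`. -/
theorem edge_minimal_two_connected_card_bounds {V : Type*} [Fintype V] [DecidableEq V]
    (G : SimpleGraph V) [DecidableRel G.Adj]
    (h2 : TwoConnected G)
    (hmin : ∀ e ∈ G.edgeSet, ¬ TwoConnected (G.deleteEdges {e})) :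
    Fintype.card V ≤ G.edgeFinset.card ∧ G.edgeFinset.card ≤ 2 * (Fintype.card V - 1) := by
  obtain ⟨_, _, hst⟩ := Fintype.exists_pair_of_one_lt_card (α := V) (by have := h2.1; omega)
  obtain ⟨_, _, hc⟩ := (h2.2 _ _ hst).exists_isCycle hst
  obtain ⟨H, hH, hHV⟩ := (IsEarDecomposable.cycle hc).exists_support_eq_univ h2.2
  obtain rfl : H = G :=
    eq_of_le_of_twoConnected hmin hH.le (hH.twoConnectedOnSupport.twoConnected hHV h2.1)
  obtain ⟨hlow, hup⟩ := hH.card_bounds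
  rw [hHV, Set.ncard_univ, Nat.card_eq_fintype_card, ← coe_edgeFinset, Set.ncard_coe_finset]
    at hlow hup
  omega
end

section
/- Let T be a tree, F an edge set on V(T), J = T ∪ F, and P the s-t path in T with |P| ≥ 3 edges, with last two edges uv and vt = e_t. If κ_J(s,t) ≥ 2 then κ_J(s,v) ≥ 2. -/
/-!
Let `p₁, p₂` be internally disjoint `s`-`t` paths and follow the tree path from `s` to `v`,
which avoids `t`, back from `v` until it first meets `p₁ ∪ p₂`, say at `x ∈ p₁`. Then `p₁` up to
`x` followed by the tree path from `x` to `v`, and `p₂` extended by the edge `tv`, are internally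
disjoint `s`-`v` paths.
-/

open SimpleGraph

namespace SimpleGraph.Walk

variable {V : Type*} {G : SimpleGraph V}

lemma IsPath.append_of_forall_mem_support {u v w : V} {p : G.Walk u v} {q : G.Walk v w}
    (hp : p.IsPath) (hq : q.IsPath) (h : ∀ z ∈ p.support, z ∈ q.support → z = v) :
    (p.append q).IsPath := by
  have hq' := hq.support_nodup
  rw [← cons_tail_support q, List.nodup_cons] at hq'
  rw [isPath_def, support_append]
  refine hp.support_nodup.append hq'.2 fun z hzp hzq => ?_
  obtain rfl := h z hzp (List.mem_of_mem_tail hzq)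
  exact hq'.1 hzq

lemma notMem_edges_of_forall_mem_support {a b c d x : V} {p : G.Walk a b} {q : G.Walk c d}
    (h : ∀ z ∈ p.support, z ∈ q.support → z = x) {e : Sym2 V} (hp : e ∈ p.edges) :
    e ∉ q.edges := by
  induction e using Sym2.ind with
  | _ y z =>
    intro hq
    have hy := h y (p.fst_mem_support_of_mem_edges hp) (q.fst_mem_support_of_mem_edges hq)
    have hz := h z (p.snd_mem_support_of_mem_edges hp) (q.snd_mem_support_of_mem_edges hq)
    exact (p.adj_of_mem_edges hp).ne (hy.trans hz.symm)

end SimpleGraph.Walk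

namespace TwoInternallyDisjointPaths

open Walk

variable {V : Type*} {J : SimpleGraph V}

lemma of_mem_support_left [DecidableEq V] {s t v x : V} {p₁ p₂ : J.Walk s t} (hp₁ : p₁.IsPath)
    (hp₂ : p₂.IsPath) (hedge : ∀ e ∈ p₁.edges, e ∉ p₂.edges)
    (hvert : ∀ y ∈ p₁.support, y ∈ p₂.support → y = s ∨ y = t)
    (hx : x ∈ p₁.support) {r : J.Walk x v} (hr : r.IsPath) (htr : t ∉ r.support)
    (hrp : ∀ z ∈ r.support, z ∈ p₁.support ∨ z ∈ p₂.support → z = x)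
    (htv : J.Adj t v) (hvs : v ≠ s) :
    TwoInternallyDisjointPaths J s v := by
  set r₁ := p₁.takeUntil x hx
  have hxt : x ≠ t := fun h => htr (h ▸ r.start_mem_support)
  have htr₁ : t ∉ r₁.support := endpoint_notMem_support_takeUntil hp₁ hx hxt.symm
  have hr₁ : r₁.support ⊆ p₁.support := p₁.support_takeUntil_subset_support hx
  have hxp₂ : x ∈ p₂.support → x = s := fun h => (hvert x hx h).resolve_right hxt
  have hvp₂ : v ∉ p₂.support := fun h => by
    obtain rfl := hrp v r.end_mem_support (Or.inr h)
    exact hvs (hxp₂ h)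
  have hcommon : ∀ y ∈ (r₁.append r).support, y ∈ p₂.support → y = s := by
    intro y hy hy₂
    rcases (mem_support_append_iff r₁ r).mp hy with hy | hy
    · exact (hvert y (hr₁ hy) hy₂).resolve_right fun h => htr₁ (h ▸ hy)
    · obtain rfl := hrp y hy (Or.inr hy₂)
      exact hxp₂ hy₂
  refine ⟨r₁.append r, p₂.concat htv, ?_, hp₂.concat hvp₂ htv, ?_, ?_⟩
  · exact (hp₁.takeUntil hx).append_of_forall_mem_support hr
      fun z hz hzr => hrp z hzr (Or.inl (hr₁ hz))
  · intro e he he₂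
    rw [edges_concat, List.concat_eq_append, List.mem_append, List.mem_singleton] at he₂
    rw [edges_append, List.mem_append] at he
    rcases he₂ with he₂ | rfl
    · rcases he with he | he
      · exact hedge e (p₁.edges_takeUntil_subset_edges hx he) he₂
      · exact notMem_edges_of_forall_mem_support (fun z hz hz₂ => hrp z hz (Or.inr hz₂)) he he₂
    · rcases he with he | he
      · exact htr₁ (r₁.fst_mem_support_of_mem_edges he)
      · exact htr (r.fst_mem_support_of_mem_edges he)
  · intro y hy hy₂
    rw [support_concat, List.mem_append, List.mem_singleton] at hy₂
    exact hy₂.imp (hcommon y hy) id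

lemma of_adj_of_walk {s t v : V} (h : TwoInternallyDisjointPaths J s t) (htv : J.Adj t v)
    (q : J.Walk s v) (htq : t ∉ q.support) : TwoInternallyDisjointPaths J s v := by
  classical
  by_cases hvs : v = s
  · subst hvs
    exact ⟨.nil, .nil, .nil, .nil, by simp, by simp⟩
  obtain ⟨p₁, p₂, hp₁, hp₂, hedge, hvert⟩ := h
  -- walking back from `v`, stop at the first vertex of `p₁ ∪ p₂`
  obtain ⟨x, hxS, hx, hfirst⟩ := q.reverse.exists_mem_support_forall_mem_support_imp_eq
    (p₁.support ++ p₂.support).toFinset ⟨s, by simp⟩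
  set r := (q.reverse.takeUntil x hx).reverse.bypass
  have hr_sub : ∀ z ∈ r.support, z ∈ (q.reverse.takeUntil x hx).support := fun z hz => by
    simpa using (q.reverse.takeUntil x hx).reverse.support_bypass_subset_support hz
  have htr : t ∉ r.support := fun ht =>
    htq (by simpa using q.reverse.support_takeUntil_subset_support hx (hr_sub t ht))
  have hrp : ∀ z ∈ r.support, z ∈ p₁.support ∨ z ∈ p₂.support → z = x := fun z hz hzp =>
    hfirst z (by simpa using hzp) (hr_sub z hz)
  rcases List.mem_append.mp (List.mem_toFinset.mp hxS) with hx₁ | hx₂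
  · exact of_mem_support_left hp₁ hp₂ hedge hvert hx₁ (bypass_isPath _) htr hrp htv hvs
  · exact of_mem_support_left hp₂ hp₁ (fun e h₂ h₁ => hedge e h₁ h₂)
      (fun y h₂ h₁ => hvert y h₁ h₂) hx₂ (bypass_isPath _) htr
      (fun z hz hzp => hrp z hz hzp.symm) htv hvs

end TwoInternallyDisjointPaths

theorem kappa_st_implies_kappa_sv_general {V : Type*} (T F : SimpleGraph V)
    (s t u v : V) (q : T.Walk s u) (huv : T.Adj u v) (hvt : T.Adj v t)
    (hpath : ((q.concat huv).concat hvt).IsPath)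
    (h : TwoInternallyDisjointPaths (T ⊔ F) s t) :
    TwoInternallyDisjointPaths (T ⊔ F) s v := by
  have htq : t ∉ (q.concat huv).support := ((Walk.concat_isPath_iff hvt).mp hpath).2
  refine h.of_adj_of_walk (Or.inl hvt.symm) ((q.concat huv).mapLe le_sup_left) ?_
  rwa [Walk.support_mapLe_eq_support]

/-- Let `T` be a tree, `F` an edge set on `V(T)`, `J = T ∪ F`, and let the `s`-`t` path in
`T` have at least `3` edges, its last two edges being `uv` and `vt`. If `κ_J(s,t) ≥ 2` then
`κ_J(s,v) ≥ 2`. -/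
theorem kappa_st_implies_kappa_sv {V : Type*} (T F : SimpleGraph V) (hT : T.IsTree)
    (s t u v : V) (q : T.Walk s u) (huv : T.Adj u v) (hvt : T.Adj v t)
    (hpath : ((q.concat huv).concat hvt).IsPath)
    (hlen : 3 ≤ ((q.concat huv).concat hvt).length)
    (h : TwoInternallyDisjointPaths (T ⊔ F) s t) :
    TwoInternallyDisjointPaths (T ⊔ F) s v :=
  kappa_st_implies_kappa_sv_general T F s t u v q huv hvt hpath h
end

section
/- Let T be a tree, F an edge set on V(T), and let P be the s-t path in T with |P| ≥ 3 edges, whose last two edges are uv and vt = e_t. Let H be the (F,E_T)-incidence graph. If H contains a path from e_s to e_t, then there exists f ∈ F on this path such that f is adjacent in H to the vertex uv (i.e., uv is an edge of T_f). -/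
open SimpleGraph

/-- The edge `e` lies on the (unique, when `T` is a tree) path in `T` between `x` and `y`. -/
def OnTreePathEdge {V : Type*} (T : SimpleGraph V) (x y : V) (e : Sym2 V) : Prop :=
  ∃ p : T.Walk x y, p.IsPath ∧ e ∈ p.edges

/-- The `(F,E_T)`-incidence graph: its vertices are `Sym2 V ⊕ Sym2 V` (edges of `T` on the
left, edges of `F` on the right), and a tree edge `e` is adjacent to an edge `f` of `F` iff
`e` lies on the tree path `T_f` between the endpoints of `f`. -/
def IncET {V : Type*} (T F : SimpleGraph V) : SimpleGraph (Sym2 V ⊕ Sym2 V) :=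
  SimpleGraph.fromRel (fun a b =>
    ∃ e f, a = Sum.inl e ∧ b = Sum.inr f ∧ e ∈ T.edgeSet ∧ f ∈ F.edgeSet ∧
      ∃ x y, f = s(x, y) ∧ OnTreePathEdge T x y e)

/-!
Delete the tree edge `uv`: since `T` is acyclic, `uv` is a bridge, so `T - uv` splits into the
side of `u`, which contains `s` (the path from `s` to `u` avoids `v`), and the side of `v`, which
contains both ends of `vt`. A tree path `T_f` that avoids `uv` stays within one side, and
consecutive vertices of the walk in `H` share such a path. So if no `f` on the walk had
`uv ∈ E(T_f)`, the walk would connect the two sides of `T - uv`.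
-/

section

variable {V : Type*} {T F : SimpleGraph V}

lemma SimpleGraph.Walk.reachable_deleteEdges_of_mem_support {G : SimpleGraph V} {a b x : V}
    {e : Sym2 V} (p : G.Walk a b) (he : e ∉ p.edges) (hx : x ∈ p.support) :
    (G.deleteEdges {e}).Reachable a x := by
  classical exact ⟨(p.toDeleteEdge e he).takeUntil x (by simpa using hx)⟩

lemma incET_adj_inl_inr {e f : Sym2 V} :
    (IncET T F).Adj (Sum.inl e) (Sum.inr f) ↔
      e ∈ T.edgeSet ∧ f ∈ F.edgeSet ∧ ∃ x y, f = s(x, y) ∧ OnTreePathEdge T x y e := by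
  simp only [IncET, fromRel_adj]
  aesop

lemma not_incET_adj_inl_inl {e e' : Sym2 V} : ¬ (IncET T F).Adj (Sum.inl e) (Sum.inl e') := by
  simp [IncET]

lemma not_incET_adj_inr_inr {f f' : Sym2 V} : ¬ (IncET T F).Adj (Sum.inr f) (Sum.inr f') := by
  simp [IncET]

lemma reachable_deleteEdges_of_incET_adj {e f e₀ : Sym2 V}
    (h : (IncET T F).Adj (Sum.inl e) (Sum.inr f))
    (hf : ¬ ∃ x y, f = s(x, y) ∧ OnTreePathEdge T x y e₀) {x y : V} (hx : x ∈ e) (hy : y ∈ f) :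
    (T.deleteEdges {e₀}).Reachable x y := by
  obtain ⟨-, -, a, b, rfl, p, hp, hep⟩ := incET_adj_inl_inr.mp h
  have he₀ : e₀ ∉ p.edges := fun he₀ => hf ⟨a, b, rfl, p, hp, he₀⟩
  have hax := p.reachable_deleteEdges_of_mem_support he₀ (p.mem_support_of_mem_edges hep hx)
  rcases Sym2.mem_iff.mp hy with rfl | rfl
  · exact hax.symm
  · exact hax.symm.trans (p.reachable_deleteEdges_of_mem_support he₀ p.end_mem_support)

/-- `Sum.elim id id` reads a vertex of `H`, on either side, as a pair of vertices of `T`. -/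
lemma reachable_deleteEdges_of_incET_walk {e₀ : Sym2 V} {a c : Sym2 V ⊕ Sym2 V}
    (w : (IncET T F).Walk a c)
    (hw : ∀ f, Sum.inr f ∈ w.support → f ∈ F.edgeSet →
      ¬ ∃ x y, f = s(x, y) ∧ OnTreePathEdge T x y e₀) :
    ∀ x ∈ Sum.elim id id a, ∃ y ∈ Sum.elim id id c, (T.deleteEdges {e₀}).Reachable x y := by
  induction w with
  | nil => exact fun x hx => ⟨x, hx, .refl x⟩
  | @cons a b c h w ih =>
    intro x hx
    obtain ⟨y, hy⟩ : ∃ y, y ∈ Sum.elim id id b := ⟨_, Sym2.out_fst_mem _⟩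
    obtain ⟨z, hz, hyz⟩ := ih (fun f hf => hw f (List.mem_cons_of_mem _ hf)) y hy
    refine ⟨z, hz, Reachable.trans ?_ hyz⟩
    match a, b, h with
    | .inl _, .inl _, h => exact absurd h not_incET_adj_inl_inl
    | .inr _, .inr _, h => exact absurd h not_incET_adj_inr_inr
    | .inl _, .inr f, h =>
      exact reachable_deleteEdges_of_incET_adj h
        (hw f (List.mem_cons_of_mem _ w.start_mem_support) (incET_adj_inl_inr.mp h).2.1) hx hy
    | .inr f, .inl _, h =>
      exact (reachable_deleteEdges_of_incET_adj h.symm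
        (hw f (List.mem_cons_self ..) (incET_adj_inl_inr.mp h.symm).2.1) hy hx).symm

end

theorem exists_f_adjacent_to_uv_general {V : Type*} (T F : SimpleGraph V) (hT : T.IsTree)
    (s t u v : V) (q : T.Walk s u) (huv : T.Adj u v) (hvt : T.Adj v t)
    (hpath : ((q.concat huv).concat hvt).IsPath)
    (es : Sym2 V) (hses : s ∈ es)
    (w : (IncET T F).Walk (Sum.inl es) (Sum.inl s(v, t))) :
    ∃ f : Sym2 V, Sum.inr f ∈ w.support ∧ f ∈ F.edgeSet ∧
      ∃ x y, f = s(x, y) ∧ OnTreePathEdge T x y s(u, v) := by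
  by_contra hcon
  obtain ⟨y, hy, hsy⟩ := reachable_deleteEdges_of_incET_walk w
    (fun f hf hfF hon => hcon ⟨f, hf, hfF, hon⟩) s hses
  simp only [Walk.concat_isPath_iff, Walk.support_concat, List.mem_append, List.mem_singleton,
    not_or] at hpath
  obtain ⟨⟨-, hvq⟩, htq, htv⟩ := hpath
  have hsu : (T.deleteEdges {s(u, v)}).Reachable s u :=
    q.reachable_deleteEdges_of_mem_support (fun h => hvq (q.snd_mem_support_of_mem_edges h))
      q.end_mem_support
  have hut : u ≠ t := fun h => htq (h ▸ q.end_mem_support)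
  have hyv : (T.deleteEdges {s(u, v)}).Reachable y v := by
    rcases Sym2.mem_iff.mp hy with rfl | rfl
    · exact .refl y
    · refine Adj.reachable (deleteEdges_adj.mpr ⟨hvt.symm, ?_⟩)
      simp [hut.symm, htv]
  exact isAcyclic_iff_forall_adj_isBridge.mp hT.isAcyclic huv (hsu.symm.trans (hsy.trans hyv))

/-- Let `T` be a tree, `F` an edge set on `V(T)`, and let the `s`-`t` path in `T` have at
least `3` edges, its last two edges being `uv` and `vt = e_t`; let `e_s` be its end edge
incident to `s`. If the `(F,E_T)`-incidence graph `H` contains a path from `e_s` to `e_t`,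
then some `f ∈ F` on this path is adjacent in `H` to the vertex `uv`, i.e. `uv ∈ E(T_f)`. -/
theorem exists_f_adjacent_to_uv {V : Type*} (T F : SimpleGraph V) (hT : T.IsTree)
    (s t u v : V) (q : T.Walk s u) (huv : T.Adj u v) (hvt : T.Adj v t)
    (hpath : ((q.concat huv).concat hvt).IsPath)
    (hlen : 3 ≤ ((q.concat huv).concat hvt).length)
    (es : Sym2 V) (hses : s ∈ es) (hes : OnTreePathEdge T s t es)
    (w : (IncET T F).Walk (Sum.inl es) (Sum.inl s(v, t))) (hw : w.IsPath) :
    ∃ f : Sym2 V, Sum.inr f ∈ w.support ∧ f ∈ F.edgeSet ∧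
      ∃ x y, f = s(x, y) ∧ OnTreePathEdge T x y s(u, v) :=
  exists_f_adjacent_to_uv_general T F hT s t u v q huv hvt hpath es hses w
end

section
/- Let F be a symmetric crossing family on a finite set V. Then the inclusion-minimal members of F (the F-cores) are pairwise disjoint. -/
/-- Two sets `A, B ⊆ V` cross if `A∩B`, `A∖B`, `B∖A` and `V∖(A∪B)` are all nonempty. -/
def Crosses {V : Type*} (A B : Set V) : Prop :=
  (A ∩ B).Nonempty ∧ (A \ B).Nonempty ∧ (B \ A).Nonempty ∧ (A ∪ B)ᶜ.Nonempty

/-- A family of subsets of `V` is a crossing family if it is closed under intersection and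
union of crossing pairs. -/
def IsCrossingFamily {V : Type*} (𝓕 : Set (Set V)) : Prop :=
  ∀ A B, A ∈ 𝓕 → B ∈ 𝓕 → Crosses A B → A ∩ B ∈ 𝓕 ∧ A ∪ B ∈ 𝓕

/-- An `𝓕`-core: an inclusion-minimal member of the family `𝓕`. -/
def IsCore {V : Type*} (𝓕 : Set (Set V)) (C : Set V) : Prop :=
  C ∈ 𝓕 ∧ ∀ B ∈ 𝓕, B ⊆ C → B = C

/-! A core meeting a member of the family without lying inside it cannot cross it, since the
intersection would be a smaller member; so the two must cover `V`. In a symmetric family `Cᶜ`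
is then a member inside the core `C'`, hence equal to it, which contradicts `C ∩ C' ≠ ∅`. -/

namespace IsCore

variable {V : Type*} {𝓕 : Set (Set V)} {A C : Set V}

theorem union_eq_univ_of_not_subset (hcross : IsCrossingFamily 𝓕) (hC : IsCore 𝓕 C)
    (hA : A ∈ 𝓕) (hmeet : (C ∩ A).Nonempty) (hCA : ¬C ⊆ A) : C ∪ A = Set.univ := by
  by_contra hcover
  have hAC : (A \ C).Nonempty :=
    Set.sdiff_nonempty.2 fun hAC => hCA (hC.2 A hA hAC).ge
  have hcrosses : Crosses C A :=
    ⟨hmeet, Set.sdiff_nonempty.2 hCA, hAC, Set.nonempty_compl.2 hcover⟩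
  have hinter : C ∩ A = C := hC.2 _ (hcross C A hC.1 hA hcrosses).1 Set.inter_subset_left
  exact hCA (Set.inter_eq_left.1 hinter)

end IsCore

theorem cores_pairwise_disjoint_general {V : Type*} (𝓕 : Set (Set V))
    (hcross : IsCrossingFamily 𝓕) (hsym : ∀ A ∈ 𝓕, Aᶜ ∈ 𝓕) :
    ∀ C C', IsCore 𝓕 C → IsCore 𝓕 C' → C ≠ C' → Disjoint C C' := by
  intro C C' hC hC' hne
  rw [Set.disjoint_iff_inter_eq_empty, ← Set.not_nonempty_iff_eq_empty]
  intro hmeet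
  have hCC' : ¬C ⊆ C' := fun hsub => hne (hC'.2 C hC.1 hsub)
  have hcover : C ∪ C' = Set.univ := hC.union_eq_univ_of_not_subset hcross hC'.1 hmeet hCC'
  have hcompl : Cᶜ = C' := hC'.2 _ (hsym C hC.1) (Set.compl_subset_iff_union.2 hcover)
  obtain ⟨x, hxC, hxC'⟩ := hmeet
  exact (hcompl ▸ hxC') hxC

/-- The cores (inclusion-minimal members) of a symmetric crossing family on a finite set
are pairwise disjoint. -/
theorem cores_pairwise_disjoint {V : Type*} [Fintype V] (𝓕 : Set (Set V))
    (hcross : IsCrossingFamily 𝓕) (hsym : ∀ A ∈ 𝓕, Aᶜ ∈ 𝓕) :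
    ∀ C C', IsCore 𝓕 C → IsCore 𝓕 C' → C ≠ C' → Disjoint C C' :=
  cores_pairwise_disjoint_general 𝓕 hcross hsym
end

section
/- Let F be a crossing family on V, J an edge set on V, and suppose S ⊆ J is a set of edges such that for each f ∈ S there exists A_f ∈ F with both endpoints of f in A_f and neither endpoint of a fixed edge g ∈ J∖S in A_f. If for every two f, f' ∈ S with a common endpoint the sets A_f, A_{f'} cross or are nested, and S is connected as a graph, then there exists a single set A ∈ F containing both endpoints of every f ∈ S and no endpoint of g. -/
/-!
Take `B ∈ 𝓕` maximal among the sets that contain the endpoints of a fixed edge `f₀ ∈ S` and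
avoid `g`. If an edge `e ∈ S` touches `B`, then `B` and `A e` meet and both miss an endpoint
of `g`, so they cross or are nested; either way `B ∪ A e` is again such a set, and maximality
forces `e ⊆ A e ⊆ B`. Thus the vertex set of `B` is closed under the edges of `S`, and
connectivity of `S` spreads it over all of `S`.
-/

theorem IsCrossingFamily.union_mem {V : Type*} {𝓕 : Set (Set V)} (h𝓕 : IsCrossingFamily 𝓕)
    {A B : Set V} (hA : A ∈ 𝓕) (hB : B ∈ 𝓕) (hmeet : (A ∩ B).Nonempty)
    (hmiss : (A ∪ B)ᶜ.Nonempty) : A ∪ B ∈ 𝓕 := by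
  by_cases hAB : A ⊆ B
  · rwa [Set.union_eq_right.mpr hAB]
  by_cases hBA : B ⊆ A
  · rwa [Set.union_eq_left.mpr hBA]
  exact (h𝓕 A B hA hB ⟨hmeet, Set.sdiff_nonempty.mpr hAB, Set.sdiff_nonempty.mpr hBA, hmiss⟩).2

theorem SimpleGraph.Reachable.mem_of_forall_adj_mem {V : Type*} {G : SimpleGraph V}
    {B : Set V} (hB : ∀ u v, G.Adj u v → u ∈ B → v ∈ B) {u v : V} (huv : G.Reachable u v)
    (hu : u ∈ B) : v ∈ B := by
  replace huv := (SimpleGraph.reachable_iff_reflTransGen u v).mp huv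
  induction huv with
  | refl => exact hu
  | tail _ hadj ih => exact hB _ _ hadj ih

theorem union_of_separating_sets_general {V : Type*} [Fintype V] (𝓕 : Set (Set V))
    (hcross : IsCrossingFamily 𝓕) (S : Set (Sym2 V))
    (g : Sym2 V) (A : Sym2 V → Set V)
    (hA : ∀ f ∈ S, A f ∈ 𝓕 ∧ (∀ x ∈ f, x ∈ A f) ∧ (∀ x ∈ g, x ∉ A f))
    (hSne : S.Nonempty)
    (hconn : ∀ x y : V, (∃ f ∈ S, x ∈ f) → (∃ f ∈ S, y ∈ f) →
      (SimpleGraph.fromEdgeSet S).Reachable x y) :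
    ∃ B ∈ 𝓕, (∀ f ∈ S, ∀ x ∈ f, x ∈ B) ∧ (∀ x ∈ g, x ∉ B) := by
  obtain ⟨f₀, hf₀⟩ := hSne
  set 𝒢 : Set (Set V) := {B | B ∈ 𝓕 ∧ (∀ x ∈ g, x ∉ B) ∧ ∀ x ∈ f₀, x ∈ B}
  obtain ⟨B, ⟨hB𝓕, hBg, hBf₀⟩, hBmax⟩ :=
    (Set.toFinite 𝒢).exists_maximal ⟨A f₀, (hA f₀ hf₀).1, (hA f₀ hf₀).2.2, (hA f₀ hf₀).2.1⟩
  have hcover : ∀ e ∈ S, ∀ z ∈ e, z ∈ B → ∀ x ∈ e, x ∈ B := by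
    intro e he z hze hzB x hxe
    obtain ⟨he𝓕, hecov, heg⟩ := hA e he
    have hmiss : ∀ x ∈ g, x ∉ B ∪ A e := fun x hx hxBe => hxBe.elim (hBg x hx) (heg x hx)
    have hunion : B ∪ A e ∈ 𝒢 :=
      ⟨hcross.union_mem hB𝓕 he𝓕 ⟨z, hzB, hecov z hze⟩ ⟨g.out.1, hmiss _ g.out_fst_mem⟩,
        hmiss, fun x hx => Or.inl (hBf₀ x hx)⟩
    exact hBmax hunion Set.subset_union_left (Or.inr (hecov x hxe))
  have hclosed : ∀ u v, (SimpleGraph.fromEdgeSet S).Adj u v → u ∈ B → v ∈ B := fun u v huv hu =>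
    hcover _ ((SimpleGraph.fromEdgeSet_adj S).mp huv).1 u (Sym2.mem_mk_left u v) hu v
      (Sym2.mem_mk_right u v)
  refine ⟨B, hB𝓕, fun f hf x hx => ?_, hBg⟩
  exact (hconn f₀.out.1 x ⟨f₀, hf₀, f₀.out_fst_mem⟩ ⟨f, hf, hx⟩).mem_of_forall_adj_mem hclosed
    (hBf₀ _ f₀.out_fst_mem)

/-- Let `𝓕` be a crossing family on `V`, `J` an edge set on `V`, `g ∈ J ∖ S`, and
`S ⊆ J` a set of edges such that each `f ∈ S` has a set `A_f ∈ 𝓕` containing both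
endpoints of `f` and no endpoint of `g`. If for every two edges of `S` sharing an endpoint
the corresponding sets cross or are nested, and `S` is connected as a graph, then there is a
single `A ∈ 𝓕` containing both endpoints of every `f ∈ S` and no endpoint of `g`. -/
theorem union_of_separating_sets {V : Type*} [Fintype V] (𝓕 : Set (Set V))
    (hcross : IsCrossingFamily 𝓕) (J S : Set (Sym2 V)) (hSJ : S ⊆ J)
    (g : Sym2 V) (hg : g ∈ J \ S) (A : Sym2 V → Set V)
    (hA : ∀ f ∈ S, A f ∈ 𝓕 ∧ (∀ x ∈ f, x ∈ A f) ∧ (∀ x ∈ g, x ∉ A f))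
    (hpair : ∀ f ∈ S, ∀ f' ∈ S, (∃ x, x ∈ f ∧ x ∈ f') →
      Crosses (A f) (A f') ∨ A f ⊆ A f' ∨ A f' ⊆ A f)
    (hSne : S.Nonempty)
    (hconn : ∀ x y : V, (∃ f ∈ S, x ∈ f) → (∃ f ∈ S, y ∈ f) →
      (SimpleGraph.fromEdgeSet S).Reachable x y) :
    ∃ B ∈ 𝓕, (∀ f ∈ S, ∀ x ∈ f, x ∈ B) ∧ (∀ x ∈ g, x ∉ B) :=
  union_of_separating_sets_general 𝓕 hcross S g A hA hSne hconn
end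

section
/- Let G be a connected graph with a spanning tree T, and let J ⊆ E(G) be such that the graph (V, J) restricted to its support is 2-edge-connected spanning a vertex set S. Then T_{J∖E(T)}, the union of tree paths T_f over f ∈ J∖E(T), is a subtree of T (i.e., the covered tree edges form a connected subgraph of T). -/
open SimpleGraph

/-- Two edge-disjoint `s`-`t` paths exist in `G`, i.e. λ_G(s,t) ≥ 2. -/
def TwoEdgeDisjointPaths {V : Type*} (G : SimpleGraph V) (s t : V) : Prop :=
  ∃ p q : G.Walk s t, p.IsPath ∧ q.IsPath ∧ ∀ e ∈ p.edges, e ∉ q.edges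

/-- The set of edges of the tree `T` covered by the tree paths `T_f` of the non-tree edges
`f ∈ J ∖ E(T)`. -/
def CoveredTreeEdges {V : Type*} (T : SimpleGraph V) (J : Set (Sym2 V)) : Set (Sym2 V) :=
  {e | e ∈ T.edgeSet ∧ ∃ f ∈ J, f ∉ T.edgeSet ∧ ∃ x y, f = s(x, y) ∧ OnTreePathEdge T x y e}

/-!
Each non-tree edge `s(x, y) ∈ J` joins `x` to every vertex of its tree path `T_f` through
covered edges. A tree edge `s(a, b) ∈ J` is itself covered: as `J` has no bridges, some
`J`-walk from `a` to `b` avoids `s(a, b)`, so it crosses the cut of `T - s(a, b)` along a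
non-tree edge whose tree path must contain `s(a, b)`. Hence covered edges join any two
vertices that are `J`-connected, in particular any two vertices of the support of `J`, and
every endpoint of a covered edge is joined to an endpoint of the `J`-edge whose path covers it.
-/

namespace SimpleGraph

variable {V : Type*} {G H : SimpleGraph V}

theorem Walk.reachable_fromEdgeSet {S : Set (Sym2 V)} {u v : V} (p : G.Walk u v)
    (hp : ∀ e ∈ p.edges, e ∈ S) : (fromEdgeSet S).Reachable u v :=
  ⟨p.transfer _ fun e he => by
    rw [edgeSet_fromEdgeSet]
    exact ⟨hp e he, G.not_isDiag_of_mem_edgeSet (p.edges_subset_edgeSet he)⟩⟩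

theorem Reachable.of_forall_adj (h : ∀ u v, G.Adj u v → H.Reachable u v) {a b : V}
    (hab : G.Reachable a b) : H.Reachable a b := by
  simp only [reachable_iff_reflTransGen] at h hab ⊢
  exact Relation.reflTransGen_closed h _ _ hab

end SimpleGraph

theorem TwoEdgeDisjointPaths.not_isBridge {V : Type*} {G : SimpleGraph V} {s t : V}
    (h : TwoEdgeDisjointPaths G s t) : ¬G.IsBridge s(s, t) := by
  obtain ⟨p, q, -, -, hpq⟩ := h
  rw [isBridge_iff_forall_walk_mem_edges, not_forall]
  by_cases hp : s(s, t) ∈ p.edges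
  · exact ⟨q, hpq _ hp⟩
  · exact ⟨p, hp⟩

section CoveredTreeEdges

variable {V : Type*} {T : SimpleGraph V} {J : Set (Sym2 V)}

theorem mem_coveredTreeEdges_of_mem_edges {x y : V} (hJ : s(x, y) ∈ J)
    (hT : s(x, y) ∉ T.edgeSet) {p : T.Walk x y} (hp : p.IsPath) {e : Sym2 V}
    (he : e ∈ p.edges) : e ∈ CoveredTreeEdges T J :=
  ⟨p.edges_subset_edgeSet he, _, hJ, hT, x, y, rfl, p, hp, he⟩

theorem reachable_coveredTreeEdges_of_mem_support {x y : V} (hJ : s(x, y) ∈ J)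
    (hT : s(x, y) ∉ T.edgeSet) {p : T.Walk x y} (hp : p.IsPath) {u : V}
    (hu : u ∈ p.support) : (fromEdgeSet (CoveredTreeEdges T J)).Reachable x u := by
  classical
  exact (p.takeUntil u hu).reachable_fromEdgeSet fun e he =>
    mem_coveredTreeEdges_of_mem_edges hJ hT hp (p.edges_takeUntil_subset_edges hu he)

theorem exists_reachable_of_mem_coveredTreeEdges {e : Sym2 V}
    (he : e ∈ CoveredTreeEdges T J) {x : V} (hx : x ∈ e) :
    ∃ u, (∃ f ∈ J, u ∈ f) ∧ (fromEdgeSet (CoveredTreeEdges T J)).Reachable u x := by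
  obtain ⟨-, f, hfJ, hfT, u, v, rfl, p, hp, hep⟩ := he
  exact ⟨u, ⟨_, hfJ, Sym2.mem_mk_left u v⟩,
    reachable_coveredTreeEdges_of_mem_support hfJ hfT hp (Walk.mem_support_of_mem_edges hep hx)⟩

theorem SimpleGraph.IsTree.mem_coveredTreeEdges_of_not_isBridge (hT : T.IsTree) {a b : V}
    (hab : T.Adj a b) (hJ : ¬(fromEdgeSet J).IsBridge s(a, b)) :
    s(a, b) ∈ CoveredTreeEdges T J := by
  obtain ⟨w, hw⟩ : ∃ w : (fromEdgeSet J).Walk a b, s(a, b) ∉ w.edges := by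
    simpa [isBridge_iff_forall_walk_mem_edges] using hJ
  set D := T.deleteEdges {s(a, b)}
  have hcut : ¬D.Reachable a b :=
    isBridge_iff.mp (isAcyclic_iff_forall_isBridge.mp hT.isAcyclic hab)
  obtain ⟨d, hdw, had, hbd⟩ := w.exists_boundary_dart {v | D.Reachable a v} .rfl hcut
  have hcross : ∀ p : T.Walk d.fst d.snd, s(a, b) ∈ p.edges := by
    simpa [D, reachable_deleteEdges_iff_exists_walk] using fun h => hbd (had.trans h)
  have hdJ : s(d.fst, d.snd) ∈ J := ((fromEdgeSet_adj J).mp d.adj).1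
  have hdT : s(d.fst, d.snd) ∉ T.edgeSet := fun hdT => by
    have hdab : s(a, b) = s(d.fst, d.snd) := by
      simpa [hdT.edges_toWalk] using hcross hdT.toWalk
    exact hw (hdab ▸ List.mem_map_of_mem hdw)
  classical
  obtain ⟨p⟩ := hT.connected.preconnected d.fst d.snd
  exact mem_coveredTreeEdges_of_mem_edges hdJ hdT p.bypass_isPath (hcross p.bypass)

theorem SimpleGraph.IsTree.reachable_coveredTreeEdges (hT : T.IsTree)
    (hJ : ∀ e ∈ (fromEdgeSet J).edgeSet, ¬(fromEdgeSet J).IsBridge e) {x y : V}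
    (hxy : (fromEdgeSet J).Reachable x y) :
    (fromEdgeSet (CoveredTreeEdges T J)).Reachable x y := by
  refine hxy.of_forall_adj fun u v huv => ?_
  obtain ⟨huvJ, hne⟩ := (fromEdgeSet_adj J).mp huv
  by_cases huvT : T.Adj u v
  · have hcov := hT.mem_coveredTreeEdges_of_not_isBridge huvT (hJ _ huv)
    exact ((fromEdgeSet_adj _).mpr ⟨hcov, hne⟩).reachable
  · classical
    obtain ⟨p⟩ := hT.connected.preconnected u v
    exact reachable_coveredTreeEdges_of_mem_support huvJ huvT p.bypass_isPath
      p.bypass.end_mem_support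

end CoveredTreeEdges

theorem covered_tree_edges_connected_general {V : Type*} (T : SimpleGraph V) (hT : T.IsTree)
    (J : Set (Sym2 V))
    (h2ec : ∀ x y : V, (∃ f ∈ J, x ∈ f) → (∃ f ∈ J, y ∈ f) → x ≠ y →
      TwoEdgeDisjointPaths (SimpleGraph.fromEdgeSet J) x y) :
    ∀ x y : V, (∃ e ∈ CoveredTreeEdges T J, x ∈ e) → (∃ e ∈ CoveredTreeEdges T J, y ∈ e) →
      (SimpleGraph.fromEdgeSet (CoveredTreeEdges T J)).Reachable x y := by
  have hbridgeless : ∀ e ∈ (fromEdgeSet J).edgeSet, ¬(fromEdgeSet J).IsBridge e := by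
    rintro ⟨u, v⟩ huv
    obtain ⟨huvJ, hne⟩ := (fromEdgeSet_adj J).mp huv
    exact (h2ec u v ⟨_, huvJ, Sym2.mem_mk_left u v⟩ ⟨_, huvJ, Sym2.mem_mk_right u v⟩
      hne).not_isBridge
  have hsupport : ∀ u v, (∃ f ∈ J, u ∈ f) → (∃ f ∈ J, v ∈ f) →
      (fromEdgeSet J).Reachable u v := by
    intro u v hu hv
    rcases eq_or_ne u v with rfl | hne
    · rfl
    · obtain ⟨p, -⟩ := h2ec u v hu hv hne
      exact ⟨p⟩
  rintro x y ⟨e, he, hxe⟩ ⟨e', he', hye'⟩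
  obtain ⟨u, hu, hux⟩ := exists_reachable_of_mem_coveredTreeEdges he hxe
  obtain ⟨v, hv, hvy⟩ := exists_reachable_of_mem_coveredTreeEdges he' hye'
  exact hux.symm.trans <|
    (hT.reachable_coveredTreeEdges hbridgeless (hsupport u v hu hv)).trans hvy

/-- Let `G` be a connected graph with spanning tree `T` and `J ⊆ E(G)` such that the graph
`(V, J)` restricted to its support (the vertices covered by `J`) is 2-edge-connected. Then
the tree edges covered by the tree paths `T_f`, `f ∈ J ∖ E(T)`, form a connected subgraph
(a subtree) of `T`. -/
theorem covered_tree_edges_connected {V : Type*} (G T : SimpleGraph V) (hT : T.IsTree)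
    (hTG : T ≤ G) (hG : G.Connected) (J : Set (Sym2 V)) (hJ : J ⊆ G.edgeSet)
    (h2ec : ∀ x y : V, (∃ f ∈ J, x ∈ f) → (∃ f ∈ J, y ∈ f) → x ≠ y →
      TwoEdgeDisjointPaths (SimpleGraph.fromEdgeSet J) x y) :
    ∀ x y : V, (∃ e ∈ CoveredTreeEdges T J, x ∈ e) → (∃ e ∈ CoveredTreeEdges T J, y ∈ e) →
      (SimpleGraph.fromEdgeSet (CoveredTreeEdges T J)).Reachable x y :=
  covered_tree_edges_connected_general T hT J h2ec
end

section
/- Let T be a tree on V with s, t ∈ V at distance 2, with middle vertex v on the s-t path, and F an edge set on V with J = T ∪ F. If κ_J(s,t) ≥ 2, then the (F,E_T)-incidence graph H has a path from e_s = sv to e_t = vt. -/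
open SimpleGraph

/-!
Every vertex `u ≠ v` of the tree `T` lies in the branch of `T - v` hanging off the first edge
`s(v, hT.branch v u)` of the tree path from `v` to `u`. Along a walk of `T ∪ F` that avoids `v`,
this first edge changes only across an edge `f = xy` of `F` whose endpoints lie in different
branches; the tree path `T_f` then runs through `v` and contains both first edges, so they are
joined in the incidence graph through `f`. Since `κ(s,t) ≥ 2`, one of the two `s`-`t` paths
avoids `v`, and the first edges towards `s` and `t` are `sv` and `vt`.
-/

namespace SimpleGraph.IsTree

variable {V : Type*} {T : SimpleGraph V} (hT : T.IsTree)

noncomputable def path (u w : V) : T.Walk u w :=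
  (hT.existsUnique_path u w).choose

lemma isPath_path (u w : V) : (hT.path u w).IsPath :=
  (hT.existsUnique_path u w).choose_spec.1

lemma path_eq {u w : V} {p : T.Walk u w} (hp : p.IsPath) : hT.path u w = p :=
  ((hT.existsUnique_path u w).choose_spec.2 p hp).symm

noncomputable def branch (v u : V) : V :=
  (hT.path v u).snd

variable {hT}

lemma adj_branch {v u : V} (h : v ≠ u) : T.Adj v (hT.branch v u) :=
  Walk.adj_snd (Walk.not_nil_of_ne h)

lemma mk_branch_mem_edges_path {v u : V} (h : v ≠ u) :
    s(v, hT.branch v u) ∈ (hT.path v u).edges :=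
  Walk.mk_start_snd_mem_edges (Walk.not_nil_of_ne h)

lemma branch_of_adj {v w : V} (h : T.Adj v w) : hT.branch v w = w := by
  rw [branch, hT.path_eq (p := .cons h .nil) (by simp [h.ne])]
  rfl

lemma branch_eq_of_mem_support_path {v u x : V} (huv : u ≠ v)
    (hu : u ∈ (hT.path v x).support) : hT.branch v u = hT.branch v x := by
  classical
  rw [branch, hT.path_eq ((hT.isPath_path v x).takeUntil hu), Walk.snd_takeUntil huv]
  rfl

lemma branch_eq_of_adj {v x y : V} (hvx : v ≠ x) (hvy : v ≠ y) (hxy : T.Adj x y) :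
    hT.branch v x = hT.branch v y := by
  by_cases hy : y ∈ (hT.path v x).support
  · exact (branch_eq_of_mem_support_path hvy.symm hy).symm
  · have hpath : hT.path v y = (hT.path v x).concat hxy :=
      hT.path_eq ((hT.isPath_path v x).concat hy hxy)
    have hx : x ∈ (hT.path v y).support := by simp [hpath]
    exact branch_eq_of_mem_support_path hvx.symm hx

lemma isPath_reverse_path_append_path {v x y : V} (hvx : v ≠ x) (hvy : v ≠ y)
    (hne : hT.branch v x ≠ hT.branch v y) :
    ((hT.path v x).reverse.append (hT.path v y)).IsPath := by
  have hy := (hT.isPath_path v y).support_nodup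
  rw [← Walk.cons_tail_support] at hy
  rw [Walk.isPath_def, Walk.support_append, Walk.support_reverse, List.nodup_append]
  refine ⟨List.nodup_reverse.mpr (hT.isPath_path v x).support_nodup,
    (List.nodup_cons.mp hy).2, ?_⟩
  rintro u hux _ huy rfl
  have huv : u ≠ v := by
    rintro rfl
    exact (List.nodup_cons.mp hy).1 huy
  exact hne <| (branch_eq_of_mem_support_path huv (List.mem_reverse.mp hux)).symm.trans <|
    branch_eq_of_mem_support_path huv (List.mem_of_mem_tail huy)

lemma onTreePathEdge_of_branch_ne {v x y : V} (hvx : v ≠ x) (hvy : v ≠ y)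
    (hne : hT.branch v x ≠ hT.branch v y) :
    OnTreePathEdge T x y s(v, hT.branch v x) ∧ OnTreePathEdge T x y s(v, hT.branch v y) := by
  have hP := isPath_reverse_path_append_path hvx hvy hne
  refine ⟨⟨_, hP, ?_⟩, ⟨_, hP, ?_⟩⟩ <;> rw [Walk.edges_append, Walk.edges_reverse]
  · exact List.mem_append_left _ (List.mem_reverse.mpr (mk_branch_mem_edges_path hvx))
  · exact List.mem_append_right _ (mk_branch_mem_edges_path hvy)

end SimpleGraph.IsTree

section IncidenceGraph

open SimpleGraph

variable {V : Type*} {T F : SimpleGraph V}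

lemma incET_adj_of_onTreePathEdge {e : Sym2 V} {x y : V} (he : e ∈ T.edgeSet) (hxy : F.Adj x y)
    (hpath : OnTreePathEdge T x y e) : (IncET T F).Adj (Sum.inl e) (Sum.inr s(x, y)) := by
  rw [IncET, fromRel_adj]
  exact ⟨Sum.inl_ne_inr, Or.inl ⟨e, _, rfl, rfl, he, hxy, x, y, rfl, hpath⟩⟩

lemma incET_reachable_branch_of_adj (hT : T.IsTree) {v x y : V} (hvx : v ≠ x) (hvy : v ≠ y)
    (hxy : (T ⊔ F).Adj x y) :
    (IncET T F).Reachable (Sum.inl s(v, hT.branch v x)) (Sum.inl s(v, hT.branch v y)) := by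
  by_cases hne : hT.branch v x = hT.branch v y
  · rw [hne]
  rcases hxy with hxyT | hF
  · exact absurd (IsTree.branch_eq_of_adj hvx hvy hxyT) hne
  obtain ⟨hpx, hpy⟩ := IsTree.onTreePathEdge_of_branch_ne hvx hvy hne
  exact (incET_adj_of_onTreePathEdge (IsTree.adj_branch hvx) hF hpx).reachable.trans
    (incET_adj_of_onTreePathEdge (IsTree.adj_branch hvy) hF hpy).symm.reachable

lemma incET_reachable_branch_of_walk (hT : T.IsTree) {v x y : V} (W : (T ⊔ F).Walk x y)
    (hv : v ∉ W.support) :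
    (IncET T F).Reachable (Sum.inl s(v, hT.branch v x)) (Sum.inl s(v, hT.branch v y)) := by
  induction W with
  | nil => rfl
  | cons hxz W ih =>
    rw [Walk.support_cons, List.mem_cons, not_or] at hv
    exact (incET_reachable_branch_of_adj hT hv.1 (ne_of_mem_of_not_mem W.start_mem_support
      hv.2).symm hxz).trans (ih hv.2)

lemma TwoInternallyDisjointPaths.exists_walk_not_mem_support {G : SimpleGraph V} {s t v : V}
    (h : TwoInternallyDisjointPaths G s t) (hvs : v ≠ s) (hvt : v ≠ t) :
    ∃ W : G.Walk s t, v ∉ W.support := by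
  obtain ⟨p, q, -, -, -, hdisj⟩ := h
  by_contra! hv
  exact (hdisj v (hv p) (hv q)).elim hvs hvt

end IncidenceGraph

theorem kappa_ge_two_implies_reachable_dist_two_general {V : Type*} (T F : SimpleGraph V)
    (hT : T.IsTree) (s v t : V) (hsv : T.Adj s v) (hvt : T.Adj v t)
    (h : TwoInternallyDisjointPaths (T ⊔ F) s t) :
    (IncET T F).Reachable (Sum.inl s(s, v)) (Sum.inl s(v, t)) := by
  obtain ⟨W, hW⟩ := h.exists_walk_not_mem_support hsv.ne' hvt.ne
  have hreach := incET_reachable_branch_of_walk hT W hW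
  rwa [IsTree.branch_of_adj hsv.symm, IsTree.branch_of_adj hvt, Sym2.eq_swap] at hreach

/-- Base case `|P| = 2` of Lemma 4 (one direction): if `s` and `t` are at distance 2 in the
tree `T`, with middle vertex `v`, and `κ_{T ∪ F}(s,t) ≥ 2`, then the `(F,E_T)`-incidence
graph has a path from `e_s = sv` to `e_t = vt`. -/
theorem kappa_ge_two_implies_reachable_dist_two {V : Type*} (T F : SimpleGraph V)
    (hT : T.IsTree) (s v t : V) (hsv : T.Adj s v) (hvt : T.Adj v t) (hst : s ≠ t)
    (h : TwoInternallyDisjointPaths (T ⊔ F) s t) :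
    (IncET T F).Reachable (Sum.inl s(s, v)) (Sum.inl s(v, t)) :=
  kappa_ge_two_implies_reachable_dist_two_general T F hT s v t hsv hvt h
end

section
/- Let T be a tree with edge set E_T, F an edge set on V(T), and let uv ∈ E_T. Partition F into F_s = {f ∈ F : both endpoints of f in the component of T − uv containing s} and F_t = {f ∈ F : both endpoints in the other component} ∪ {f : T_f contains uv}. If no f ∈ F has uv on its tree path T_f, then in the (F,E_T)-incidence graph there is no path between any edge of T in the s-side component and any edge of T in the t-side component. -/
open SimpleGraph

lemma Sym2.map_eq_diag_of_forall_mem {α β : Type*} {f : α → β} {s : Sym2 α} {c : β}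
    (h : ∀ x ∈ s, f x = c) : s.map f = s(c, c) := by
  induction s using Sym2.ind with
  | h x y => simp [h x (Sym2.mem_mk_left x y), h y (Sym2.mem_mk_right x y)]

section

variable {V : Type*}

namespace SimpleGraph

lemma Reachable.apply_eq_of_forall_adj {β : Type*} {G : SimpleGraph V} {φ : V → β}
    (hφ : ∀ a b, G.Adj a b → φ a = φ b) {a b : V} (h : G.Reachable a b) : φ a = φ b := by
  obtain ⟨p⟩ := h
  induction p with
  | nil => rfl
  | cons hadj _ ih => exact (hφ _ _ hadj).trans ih

lemma Walk.reachable_deleteEdge_of_mem_support {G : SimpleGraph V} {x y z : V} {d : Sym2 V}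
    (p : G.Walk x y) (hd : d ∉ p.edges) (hz : z ∈ p.support) :
    (G.deleteEdges {d}).Reachable x z := by
  classical
  exact ⟨(p.toDeleteEdge d hd).takeUntil z (by rwa [Walk.support_transfer])⟩

end SimpleGraph

lemma OnTreePathEdge.map_connectedComponentMk_deleteEdges_eq {T : SimpleGraph V} {x y : V}
    {e d : Sym2 V} (he : OnTreePathEdge T x y e) (hd : ¬ OnTreePathEdge T x y d) :
    e.map (T.deleteEdges {d}).connectedComponentMk =
      s(x, y).map (T.deleteEdges {d}).connectedComponentMk := by
  obtain ⟨p, hp, hep⟩ := he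
  have hdp : d ∉ p.edges := fun h => hd ⟨p, hp, h⟩
  have hsupp : ∀ z ∈ p.support,
      (T.deleteEdges {d}).connectedComponentMk z = (T.deleteEdges {d}).connectedComponentMk x :=
    fun z hz => ConnectedComponent.eq.mpr (p.reachable_deleteEdge_of_mem_support hdp hz).symm
  rw [Sym2.map_eq_diag_of_forall_mem fun z hz => hsupp z (p.mem_support_of_mem_edges hep hz),
    Sym2.map_mk, hsupp y p.end_mem_support]

lemma IncET.map_connectedComponentMk_eq_of_adj {T F : SimpleGraph V} {d : Sym2 V}
    (hd : ∀ f ∈ F.edgeSet, ∀ x y, f = s(x, y) → ¬ OnTreePathEdge T x y d)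
    {a b : Sym2 V ⊕ Sym2 V} (hab : (IncET T F).Adj a b) :
    (a.elim id id).map (T.deleteEdges {d}).connectedComponentMk =
      (b.elim id id).map (T.deleteEdges {d}).connectedComponentMk := by
  rw [IncET, fromRel_adj] at hab
  rcases hab.2 with ⟨e, f, rfl, rfl, -, hf, x, y, rfl, hef⟩ |
      ⟨e, f, rfl, rfl, -, hf, x, y, rfl, hef⟩
  · exact hef.map_connectedComponentMk_deleteEdges_eq (hd _ hf x y rfl)
  · exact (hef.map_connectedComponentMk_deleteEdges_eq (hd _ hf x y rfl)).symm

end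

theorem no_path_across_uncovered_edge_general {V : Type*} (T F : SimpleGraph V) (hT : T.IsTree)
    (u v : V) (huv : T.Adj u v)
    (hnone : ∀ f ∈ F.edgeSet, ∀ x y, f = s(x, y) → ¬ OnTreePathEdge T x y s(u, v))
    (e₁ e₂ : Sym2 V)
    (h₁ : ∀ x ∈ e₁, (T.deleteEdges {s(u, v)}).Reachable u x)
    (h₂ : ∀ x ∈ e₂, (T.deleteEdges {s(u, v)}).Reachable v x) :
    ¬ (IncET T F).Reachable (Sum.inl e₁) (Sum.inl e₂) := by
  intro hreach
  set C := (T.deleteEdges {s(u, v)}).connectedComponentMk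
  have hbridge : T.IsBridge s(u, v) := isAcyclic_iff_forall_adj_isBridge.mp hT.isAcyclic huv
  have hmap : e₁.map C = e₂.map C :=
    hreach.apply_eq_of_forall_adj fun _ _ hab => IncET.map_connectedComponentMk_eq_of_adj hnone hab
  have hu : e₁.map C = s(C u, C u) :=
    Sym2.map_eq_diag_of_forall_mem fun x hx => ConnectedComponent.eq.mpr (h₁ x hx).symm
  have hv : e₂.map C = s(C v, C v) :=
    Sym2.map_eq_diag_of_forall_mem fun x hx => ConnectedComponent.eq.mpr (h₂ x hx).symm
  exact hbridge (ConnectedComponent.exact (Sym2.diag_injective (hu.symm.trans (hmap.trans hv))))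

/-- Let `T` be a tree and `uv ∈ E(T)`, so that `T − uv` has two components, one containing
`u` and one containing `v`. If no `f ∈ F` has `uv` on its tree path `T_f`, then in the
`(F,E_T)`-incidence graph there is no path between a tree edge lying in the `u`-side
component and a tree edge lying in the `v`-side component. -/
theorem no_path_across_uncovered_edge {V : Type*} (T F : SimpleGraph V) (hT : T.IsTree)
    (u v : V) (huv : T.Adj u v)
    (hnone : ∀ f ∈ F.edgeSet, ∀ x y, f = s(x, y) → ¬ OnTreePathEdge T x y s(u, v))
    (e₁ e₂ : Sym2 V) (he₁ : e₁ ∈ T.edgeSet) (he₂ : e₂ ∈ T.edgeSet)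
    (h₁ : ∀ x ∈ e₁, (T.deleteEdges {s(u, v)}).Reachable u x)
    (h₂ : ∀ x ∈ e₂, (T.deleteEdges {s(u, v)}).Reachable v x) :
    ¬ (IncET T F).Reachable (Sum.inl e₁) (Sum.inl e₂) :=
  no_path_across_uncovered_edge_general T F hT u v huv hnone e₁ e₂ h₁ h₂
end
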